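/- Every generic monic motion polynomial C = P + εQ ∈ 𝔻ℍ[t] of degree n (P, Q ∈ ℍ[t], with P having no nonconstant monic real polynomial factor) admits a factorization C = (t − h₁)(t − h₂) ⋯ (t − hₙ) with h₁, …, hₙ ∈ 𝔻ℍ such that each linear factor t − hᵢ is itself a motion polynomial, i.e. ν(t − hᵢ) ∈ ℝ[t]. -/

import Mathlib

/-!
Induction on the degree, splitting off one linear right factor at a time. The norm
polynomial `C C̄` is real of positive degree, so it has a monic irreducible real factor `M`,
of degree at most two and central in `𝔻ℍ[t]`. Dividing, `C = M H + R` with `deg R < deg M`,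
and expanding `C C̄` shows `M ∣ R R̄`. Genericity makes the primal part of `R` nonzero, and
comparing degrees of primal parts in the domain `ℍ[t]` forces `deg M = 2` and `R = r (t - h)`
with `r` invertible. Then `M ∣ (t - h)(t - h̄)`, so `M = (t - h)(t - h̄) = (t - h̄)(t - h)` and
`C = (H (t - h̄) + r)(t - h)`. The left factor is again monic and generic, and its norm
polynomial `C C̄ / M` is real.
-/

open Polynomial DualNumber

/-- The dual quaternions `ℍ ⊕ εℍ` with `ε` central and `ε² = 0`. -/
abbrev DH : Type := DualNumber (Quaternion ℝ)

/-- Conjugation of a dual quaternion: quaternion conjugation in both components. -/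
def dconj (x : DH) : DH := (star x.fst, star x.snd)

/-- Coefficientwise conjugation of a left polynomial over the dual quaternions. -/
noncomputable def dpconj (p : Polynomial DH) : Polynomial DH :=
  ⟨AddMonoidAlgebra.ofCoeff (Finsupp.mapRange dconj (by simp [dconj]; rfl) p.toFinsupp.coeff)⟩

open MulOpposite
open scoped Quaternion

section Divisibility

variable {S : Type*} [Ring S] {m : S}

lemma dvd_mul_of_dvd_add_mul_add (hm : ∀ x, Commute m x) {a b r s : S}
    (h : m ∣ (m * a + r) * (b * m + s)) : m ∣ r * s := by
  have hexp : (m * a + r) * (b * m + s) = m * (a * (b * m + s) + r * b) + r * s := by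
    have hrb : r * b * m = m * (r * b) := ((hm _).eq).symm
    simp only [add_mul, mul_add, ← mul_assoc]
    rw [hrb]; noncomm_ring
  rwa [hexp, dvd_add_right (dvd_mul_right _ _)] at h

lemma dvd_of_dvd_mul_mul_of_isUnit (hm : ∀ x, Commute m x) {a b q : S} (ha : IsUnit a)
    (hb : IsUnit b) (h : m ∣ a * q * b) : m ∣ q := by
  obtain ⟨c, hc⟩ := (hb.dvd_mul_right).mp h
  obtain ⟨u, rfl⟩ := ha
  refine ⟨↑u⁻¹ * c, ?_⟩
  calc q = ↑u⁻¹ * (↑u * q) := by rw [← mul_assoc, Units.inv_mul, one_mul]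
    _ = m * (↑u⁻¹ * c) := by rw [hc, ← mul_assoc, ← (hm _).eq, mul_assoc]

end Divisibility

namespace Polynomial

variable {R : Type*} [Semiring R]

noncomputable def antiMap (σ : R →+* Rᵐᵒᵖ) : R[X] →+* R[X]ᵐᵒᵖ :=
  (opRingEquiv R).symm.toRingHom.comp (mapRingHom σ)

@[simp] lemma coeff_unop_antiMap (σ : R →+* Rᵐᵒᵖ) (p : R[X]) (n : ℕ) :
    (unop (antiMap σ p)).coeff n = unop (σ (p.coeff n)) := by
  simpa [antiMap] using congrArg unop (coeff_opRingEquiv (antiMap σ p) n).symm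

@[simp] lemma unop_antiMap_C (σ : R →+* Rᵐᵒᵖ) (a : R) :
    unop (antiMap σ (C a)) = C (unop (σ a)) := by
  simp [antiMap]

@[simp] lemma unop_antiMap_X (σ : R →+* Rᵐᵒᵖ) : unop (antiMap σ X) = X := by
  simp [antiMap]

lemma natDegree_unop_antiMap {σ : R →+* Rᵐᵒᵖ} (hσ : Function.Injective σ) (p : R[X]) :
    (unop (antiMap σ p)).natDegree = p.natDegree := by
  rw [← natDegree_opRingEquiv, antiMap, RingHom.comp_apply, RingEquiv.toRingHom_eq_coe,
    RingHom.coe_coe, RingEquiv.apply_symm_apply, coe_mapRingHom,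
    natDegree_map_eq_of_injective hσ]

lemma unop_antiMap_ne_zero {σ : R →+* Rᵐᵒᵖ} (hσ : Function.Injective σ) {p : R[X]}
    (hp : p ≠ 0) : unop (antiMap σ p) ≠ 0 := by
  refine fun h => hp (ext fun n => hσ ?_)
  simpa using congrArg (coeff · n) h

lemma commute_map_algebraMap {K A : Type*} [CommSemiring K] [Semiring A] [Algebra K A]
    (N : K[X]) (p : A[X]) : Commute (N.map (algebraMap K A)) p := by
  induction N using Polynomial.induction_on' with
  | add f g hf hg => rw [Polynomial.map_add]; exact hf.add_left hg
  | monomial n r =>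
    rw [map_monomial, ← C_mul_X_pow_eq_monomial, ← Polynomial.algebraMap_apply]
    exact (Algebra.commute_algebraMap_left r p).mul_left (commute_X_pow p n)

lemma exists_eq_C_mul_X_sub_C {S : Type*} [Ring S] {p : S[X]} (hp : p.natDegree ≤ 1)
    (hu : IsUnit (p.coeff 1)) : ∃ h, p = C (p.coeff 1) * (X - C h) := by
  obtain ⟨u, hu⟩ := hu
  refine ⟨-(↑u⁻¹ * p.coeff 0), ?_⟩
  have hinv : p.coeff 1 * ↑u⁻¹ = 1 := by rw [← hu, Units.mul_inv]
  rw [mul_sub, ← C_mul, mul_neg, ← mul_assoc, hinv, one_mul, C_neg, sub_neg_eq_add]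
  exact eq_X_add_C_of_natDegree_le_one hp

lemma mem_lifts_of_monic_mul {R S : Type*} [Ring R] [Ring S] {f : R →+* S} {q : R[X]}
    {p : S[X]} (hq : q.Monic) (h : q.map f * p ∈ lifts f) : p ∈ lifts f := by
  obtain ⟨N, hN⟩ := h
  refine ⟨N /ₘ q, ?_⟩
  rw [coe_mapRingHom] at hN ⊢
  rw [map_divByMonic f hq, hN, mul_divByMonic_cancel_left p (hq.map f)]

lemma commute_X_sub_C_X_sub_C {S : Type*} [Ring S] {a b : S} (h : Commute a b) :
    Commute (X - C a) (X - C b) :=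
  (commute_X _).sub_left (((commute_X _).symm).sub_right (h.map C))

end Polynomial

@[simp] lemma fst_dconj (x : DH) : (dconj x).fst = star x.fst := rfl

@[simp] lemma snd_dconj (x : DH) : (dconj x).snd = star x.snd := rfl

lemma dconj_mul (x y : DH) : dconj (x * y) = dconj y * dconj x := by
  ext : 1 <;> simp [TrivSqZeroExt.fst_mul, TrivSqZeroExt.snd_mul, add_comm]

lemma dconj_dconj (x : DH) : dconj (dconj x) = x := by
  ext : 1 <;> simp

lemma dconj_add (x y : DH) : dconj (x + y) = dconj x + dconj y := by
  ext : 1 <;> simp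

def dconjHom : DH →+* DHᵐᵒᵖ where
  toFun x := op (dconj x)
  map_one' := congrArg op <| by ext : 1 <;> simp
  map_mul' x y := by simp [dconj_mul]
  map_zero' := congrArg op <| by ext : 1 <;> simp
  map_add' x y := by simp [dconj_add]

@[simp] lemma coeff_dpconj (p : DH[X]) (n : ℕ) : (dpconj p).coeff n = dconj (p.coeff n) := rfl

lemma dconjHom_injective : Function.Injective dconjHom := fun x y h => by
  simpa [dconjHom, dconj_dconj] using congrArg (fun z => dconj (unop z)) h

lemma dpconj_eq_unop_antiMap (p : DH[X]) : dpconj p = unop (antiMap dconjHom p) :=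
  ext fun n => by simp [dconjHom]

lemma dpconj_mul (p q : DH[X]) : dpconj (p * q) = dpconj q * dpconj p := by
  simp [dpconj_eq_unop_antiMap]

lemma dpconj_add (p q : DH[X]) : dpconj (p + q) = dpconj p + dpconj q := by
  simp [dpconj_eq_unop_antiMap]

lemma dpconj_X_sub_C (h : DH) : dpconj (X - C h) = X - C (dconj h) := by
  simp [dpconj_eq_unop_antiMap, dconjHom]

lemma dpconj_C (a : DH) : dpconj (C a) = C (dconj a) := by
  simp [dpconj_eq_unop_antiMap, dconjHom]

lemma dconj_algebraMap (r : ℝ) : dconj (algebraMap ℝ DH r) = algebraMap ℝ DH r := by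
  ext : 1 <;> simp [TrivSqZeroExt.algebraMap_eq_inl']

lemma dpconj_map_algebraMap (N : ℝ[X]) :
    dpconj (N.map (algebraMap ℝ DH)) = N.map (algebraMap ℝ DH) :=
  ext fun n => by simp [coeff_map, dconj_algebraMap]

lemma natDegree_dpconj (p : DH[X]) : (dpconj p).natDegree = p.natDegree := by
  rw [dpconj_eq_unop_antiMap, natDegree_unop_antiMap dconjHom_injective]

lemma monic_dpconj {p : DH[X]} (hp : p.Monic) : (dpconj p).Monic := by
  rw [Monic, leadingCoeff, natDegree_dpconj]
  show dconj p.leadingCoeff = 1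
  rw [hp.leadingCoeff]
  exact congrArg unop (map_one dconjHom)

lemma commute_dconj_self (x : DH) : Commute x (dconj x) := by
  apply TrivSqZeroExt.ext
  · exact (star_comm_self' x.fst).symm
  -- both sides are twice the real scalar `⟪x.fst, x.snd⟫`
  · show x.fst * star x.snd + x.snd * star x.fst = star x.fst * x.snd + star x.snd * x.fst
    ext <;> simp [Quaternion.re_mul, Quaternion.imI_mul, Quaternion.imJ_mul,
      Quaternion.imK_mul] <;> ring

noncomputable abbrev primal : DH →+* ℍ[ℝ] := TrivSqZeroExt.fstHom ℝ ℍ[ℝ] ℍ[ℝ]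

lemma map_primal_dpconj (p : DH[X]) :
    (dpconj p).map primal =
      unop (antiMap (starRingEquiv : ℍ[ℝ] ≃+* ℍ[ℝ]ᵐᵒᵖ) (p.map primal)) :=
  ext fun n => by simp [coeff_map]

lemma map_primal_map_algebraMap (N : ℝ[X]) :
    (N.map (algebraMap ℝ DH)).map primal = N.map (algebraMap ℝ ℍ[ℝ]) := by
  rw [Polynomial.map_map]; rfl

def IsGeneric (P : Polynomial ℍ[ℝ]) : Prop :=
  ¬ ∃ M : ℝ[X], M.Monic ∧ 1 ≤ M.degree ∧ M.map (algebraMap ℝ ℍ[ℝ]) ∣ P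

lemma IsGeneric.of_mul_right {P Q : Polynomial ℍ[ℝ]} (h : IsGeneric (P * Q)) : IsGeneric P :=
  fun ⟨M, hM, hdeg, hdvd⟩ => h ⟨M, hM, hdeg, hdvd.mul_right Q⟩

lemma mul_dpconj_mul_eq {F L : DH[X]} {M : ℝ[X]}
    (hL : L * dpconj L = M.map (algebraMap ℝ DH)) :
    F * L * dpconj (F * L) = M.map (algebraMap ℝ DH) * (F * dpconj F) := by
  rw [dpconj_mul, mul_assoc, ← mul_assoc L, hL, ← mul_assoc,
    ← (commute_map_algebraMap M F).eq, mul_assoc]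

lemma natDegree_le_two_mul_natDegree_map_primal {R : DH[X]} {M : ℝ[X]} (hM : M.Monic)
    (hR : R.map primal ≠ 0) (hdvd : M.map (algebraMap ℝ DH) ∣ R * dpconj R) :
    M.natDegree ≤ 2 * (R.map primal).natDegree := by
  have hinj : Function.Injective (starRingEquiv : ℍ[ℝ] ≃+* ℍ[ℝ]ᵐᵒᵖ) :=
    RingEquiv.injective _
  have hdvd' := Polynomial.map_dvd primal hdvd
  rw [Polynomial.map_mul, map_primal_dpconj, map_primal_map_algebraMap] at hdvd'
  have hR' :=
    unop_antiMap_ne_zero (σ := (starRingEquiv : ℍ[ℝ] ≃+* ℍ[ℝ]ᵐᵒᵖ)) hinj hR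
  have := natDegree_le_of_dvd hdvd' (mul_ne_zero hR hR')
  rwa [natDegree_mul hR hR', natDegree_unop_antiMap hinj, hM.natDegree_map, ← two_mul]
    at this

lemma mul_dpconj_X_sub_C_eq_of_dvd {M : ℝ[X]} {r h : DH} (hM : M.Monic)
    (hM2 : 2 ≤ M.natDegree) (hr : IsUnit r)
    (hdvd : M.map (algebraMap ℝ DH) ∣ C r * (X - C h) * dpconj (C r * (X - C h))) :
    (X - C h) * dpconj (X - C h) = M.map (algebraMap ℝ DH) := by
  rw [dpconj_X_sub_C]
  have hmonic := (monic_X_sub_C h).mul (monic_X_sub_C (dconj h))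
  refine eq_of_monic_of_dvd_of_natDegree_le (hM.map _) hmonic ?_ ?_
  · refine dvd_of_dvd_mul_mul_of_isUnit (commute_map_algebraMap M) (isUnit_C.mpr hr)
      (isUnit_C.mpr (hr.map dconjHom).unop) ?_
    rwa [dpconj_mul, dpconj_C, dpconj_X_sub_C, ← mul_assoc, mul_assoc (C _)] at hdvd
  · rwa [(monic_X_sub_C h).natDegree_mul (monic_X_sub_C _), natDegree_X_sub_C,
      natDegree_X_sub_C, hM.natDegree_map]

theorem exists_eq_mul_X_sub_C_of_dvd_mul_dpconj {F : DH[X]} {M : ℝ[X]} (hM : M.Monic)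
    (hM2 : M.natDegree ≤ 2) (hdvd : M.map (algebraMap ℝ DH) ∣ F * dpconj F)
    (hndvd : ¬ M.map (algebraMap ℝ ℍ[ℝ]) ∣ F.map primal) :
    ∃ F₁ h, F = F₁ * (X - C h) ∧
      (X - C h) * dpconj (X - C h) = M.map (algebraMap ℝ DH) := by
  set M' := M.map (algebraMap ℝ DH)
  have hM' : M'.Monic := hM.map _
  have hcomm : ∀ p, Commute M' p := commute_map_algebraMap M
  set R := F %ₘ M'
  set H := F /ₘ M'
  have hFHR : F = M' * H + R := by rw [add_comm]; exact (modByMonic_add_div F M').symm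
  have hRR : M' ∣ R * dpconj R := by
    refine dvd_mul_of_dvd_add_mul_add hcomm (a := H) (b := dpconj H) ?_
    rwa [hFHR, dpconj_add, dpconj_mul, dpconj_map_algebraMap] at hdvd
  have hRp : R.map primal ≠ 0 := by
    rwa [Ne, map_modByMonic primal hM', map_primal_map_algebraMap,
      modByMonic_eq_zero_iff_dvd (hM.map _)]
  have hRM : R.natDegree < M.natDegree := by
    rw [← hM.natDegree_map (algebraMap ℝ DH)]
    exact natDegree_lt_natDegree (fun hR0 => hRp (by rw [hR0, Polynomial.map_zero]))
      (degree_modByMonic_lt F hM')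
  have hMRp := natDegree_le_two_mul_natDegree_map_primal hM hRp hRR
  have hRpR := natDegree_map_le (f := primal) (p := R)
  have hRp1 : (R.map primal).natDegree = 1 := by omega
  set r := R.coeff 1
  have hunit : IsUnit r := by
    refine TrivSqZeroExt.isUnit_iff_isUnit_fst.mpr (isUnit_iff_ne_zero.mpr ?_)
    have := leadingCoeff_ne_zero.mpr hRp
    rwa [leadingCoeff, hRp1, coeff_map] at this
  obtain ⟨h, hRh⟩ := exists_eq_C_mul_X_sub_C (by omega) hunit
  have hνh : (X - C h) * dpconj (X - C h) = M' :=
    mul_dpconj_X_sub_C_eq_of_dvd hM (by omega) hunit (hRh ▸ hRR)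
  refine ⟨H * (X - C (dconj h)) + C r, h, ?_, hνh⟩
  rw [hFHR, (hcomm H).eq, ← hνh, dpconj_X_sub_C,
    (commute_X_sub_C_X_sub_C (commute_dconj_self h)).eq, hRh, add_mul, mul_assoc]

theorem exists_eq_mul_X_sub_C_of_isGeneric {F : DH[X]} (hF : F.Monic) (hdeg : 0 < F.natDegree)
    (hmot : F * dpconj F ∈ lifts (algebraMap ℝ DH)) (hgen : IsGeneric (F.map primal)) :
    ∃ F₁ h, ∃ M : ℝ[X], M.Monic ∧ F = F₁ * (X - C h) ∧
      (X - C h) * dpconj (X - C h) = M.map (algebraMap ℝ DH) := by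
  obtain ⟨N, hN⟩ := hmot
  rw [coe_mapRingHom] at hN
  have hNdeg : 0 < N.natDegree := by
    rw [← natDegree_map_eq_of_injective (algebraMap ℝ DH).injective, hN,
      hF.natDegree_mul (monic_dpconj hF)]
    omega
  obtain ⟨M, hM, hMirr, hMN⟩ :=
    exists_monic_irreducible_factor N (not_isUnit_of_natDegree_pos _ hNdeg)
  have hdvd : M.map (algebraMap ℝ DH) ∣ F * dpconj F := hN ▸ Polynomial.map_dvd _ hMN
  have hndvd : ¬ M.map (algebraMap ℝ ℍ[ℝ]) ∣ F.map primal := fun h =>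
    hgen ⟨M, hM, Nat.WithBot.one_le_iff_zero_lt.mpr (degree_pos_of_irreducible hMirr), h⟩
  obtain ⟨F₁, h, hFh, hνh⟩ :=
    exists_eq_mul_X_sub_C_of_dvd_mul_dpconj hM hMirr.natDegree_le_two hdvd hndvd
  exact ⟨F₁, h, M, hM, hFh, hνh⟩

theorem exists_prod_X_sub_C_of_isGeneric {F : DH[X]} {n : ℕ} (hF : F.Monic)
    (hdeg : F.natDegree = n) (hmot : F * dpconj F ∈ lifts (algebraMap ℝ DH))
    (hgen : IsGeneric (F.map primal)) :
    ∃ h : Fin n → DH, F = (List.ofFn fun i => X - C (h i)).prod ∧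
      ∀ i, (X - C (h i)) * dpconj (X - C (h i)) ∈ lifts (algebraMap ℝ DH) := by
  induction n generalizing F with
  | zero =>
    exact ⟨Fin.elim0, by simp [eq_one_of_monic_natDegree_zero hF hdeg], fun i => i.elim0⟩
  | succ n ih =>
    obtain ⟨F₁, h, M, hM, rfl, hνh⟩ :=
      exists_eq_mul_X_sub_C_of_isGeneric hF (by omega) hmot hgen
    have hF₁ : F₁.Monic := (monic_X_sub_C h).of_mul_monic_right hF
    rw [hF₁.natDegree_mul (monic_X_sub_C h), natDegree_X_sub_C] at hdeg
    rw [mul_dpconj_mul_eq hνh] at hmot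
    rw [Polynomial.map_mul] at hgen
    obtain ⟨g, hg, hνg⟩ :=
      ih hF₁ (by omega) (mem_lifts_of_monic_mul hM hmot) hgen.of_mul_right
    refine ⟨Fin.snoc g h, ?_, Fin.lastCases ?_ fun i => ?_⟩
    · rw [List.ofFn_succ', List.prod_concat]
      simp [hg]
    · simpa using ⟨M, hνh.symm⟩
    · simpa using hνg i

theorem generic_motion_polynomial_factorization_general
    (P Q : Polynomial (Quaternion ℝ)) (F : Polynomial DH) (n : ℕ)
    (hF : ∀ i, F.coeff i = (P.coeff i, Q.coeff i))
    (hFmonic : F.Monic) (hdeg : F.natDegree = n)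
    (hmotion : ∀ i, ∃ r : ℝ, (F * dpconj F).coeff i = algebraMap ℝ DH r)
    (hgen : ¬ ∃ M : Polynomial ℝ, M.Monic ∧ 1 ≤ M.degree ∧
      M.map (algebraMap ℝ (Quaternion ℝ)) ∣ P) :
    ∃ h : Fin n → DH,
      F = (List.ofFn fun i => X - Polynomial.C (h i)).prod ∧
      ∀ i : Fin n, ∀ j : ℕ, ∃ r : ℝ,
        ((X - Polynomial.C (h i)) * dpconj (X - Polynomial.C (h i))).coeff j
          = algebraMap ℝ DH r := by
  have hP : F.map primal = P := ext fun i => by rw [coeff_map, hF i]; rfl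
  have hmot : F * dpconj F ∈ lifts (algebraMap ℝ DH) :=
    (lifts_iff_coeff_lifts _).mpr fun i => (hmotion i).imp fun _ => Eq.symm
  obtain ⟨h, hprod, hνh⟩ := exists_prod_X_sub_C_of_isGeneric hFmonic hdeg hmot (hP ▸ hgen)
  exact ⟨h, hprod, fun i j => ((lifts_iff_coeff_lifts _).mp (hνh i) j).imp fun _ => Eq.symm⟩

/-- Every generic monic motion polynomial `F = P + εQ` of degree `n` admits a factorization
into `n` monic linear factors, each of which is itself a motion polynomial. -/
theorem generic_motion_polynomial_factorization
    (P Q : Polynomial (Quaternion ℝ)) (F : Polynomial DH) (n : ℕ)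
    (hF : ∀ i, F.coeff i = (P.coeff i, Q.coeff i))
    (hFmonic : F.Monic) (hdeg : F.natDegree = n)
    (hmotion : ∀ i, ∃ r : ℝ, (F * dpconj F).coeff i = algebraMap ℝ DH r)
    (hne : F * dpconj F ≠ 0)
    (hgen : ¬ ∃ M : Polynomial ℝ, M.Monic ∧ 1 ≤ M.degree ∧
      M.map (algebraMap ℝ (Quaternion ℝ)) ∣ P) :
    ∃ h : Fin n → DH,
      F = (List.ofFn fun i => X - Polynomial.C (h i)).prod ∧
      ∀ i : Fin n, ∀ j : ℕ, ∃ r : ℝ,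
        ((X - Polynomial.C (h i)) * dpconj (X - Polynomial.C (h i))).coeff j
          = algebraMap ℝ DH r :=
  generic_motion_polynomial_factorization_general P Q F n hF hFmonic hdeg hmotion hgen
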